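/- Let p > 0 and q > 0 with 0 < p·q < 1, and let θ ∈ (0,1]. Then the lower and upper θ-intermediate dimensions of the attenuated topologist's sine curve T_{p,q} both equal (p(1+q) + 2θ(1-pq))/(p(1+q) + θ(1-pq)), i.e. lodim_θ(T_{p,q}) = updim_θ(T_{p,q}) = (p(1+q) + 2θ(1-pq))/(p(1+q) + θ(1-pq)). -/

import Mathlib

/-!
Both dimensions are governed by the scale `N ≈ δ^(-γ)` with `γ = θ / (p(1+q) + θ(1-pq))`,
chosen so that `d = 1 + γ(1-pq)` and `γ p(1+q) = θ(2-d)`, where `d` is the claimed value.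

Upper bound: for `t ≤ N` the arc over `[n, n+1]` is `O(n^(-pq))`-Lipschitz, so `≲ n^(-pq)/δ` balls
of diameter `δ` cover it, `≲ N^(1-pq)/δ = δ^(-d)` in all; the tail `t ≥ N` lies in a box of size
`N^(-p) × 2N^(-pq)`, which a grid of `≲ N^(-p(1+q)) δ^(-2θ) = δ^(-θd)` balls of diameter `δ^θ`
covers. Hence `∑ |U|^s ≲ δ^(s-d) + δ^(θ(s-d)) → 0` for `s > d`.

Lower bound: for `N ≤ n < 2N` and `j < K ≈ N^(-pq)/δ` the curve passes through a point of height
`±2δj` with parameter in `[n, n+1/2]`. Points in different columns are `≳ N^(-p-1)` apart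
horizontally and points in the same column `2δ` apart vertically, so a set of diameter
`r ∈ [δ, δ^θ]` contains at most `(r N^(p+1) + 1)(r/2δ + 1) ≤ NK r^s / 2` of the `NK` points when
`s < d` and `δ` is small; any admissible cover therefore has `∑ |U|^s ≥ 2`.
-/

open Set Metric Filter

/-- The upper θ-intermediate dimension of a set `E` in a metric space:
the infimum of all `s ≥ 0` such that for every `ε > 0` there is `δ₀ > 0` such that for all
`0 < δ < δ₀` there is a countable cover `𝒰` of `E` with `δ ≤ diam U ≤ δ ^ θ` for all `U ∈ 𝒰`
and `∑_{U ∈ 𝒰} (diam U) ^ s ≤ ε`. -/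
noncomputable def updim {X : Type*} [PseudoMetricSpace X] (θ : ℝ) (E : Set X) : ℝ :=
  sInf {s : ℝ | 0 ≤ s ∧ ∀ ε : ℝ, 0 < ε → ∃ δ₀ : ℝ, 0 < δ₀ ∧ ∀ δ : ℝ, 0 < δ → δ < δ₀ →
    ∃ 𝒰 : Set (Set X), 𝒰.Countable ∧ E ⊆ ⋃₀ 𝒰 ∧
      (∀ U ∈ 𝒰, δ ≤ diam U ∧ diam U ≤ δ ^ θ) ∧
      ∑' U : 𝒰, ENNReal.ofReal (diam (U : Set X) ^ s) ≤ ENNReal.ofReal ε}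

/-- The lower θ-intermediate dimension of a set `E` in a metric space. -/
noncomputable def lodim {X : Type*} [PseudoMetricSpace X] (θ : ℝ) (E : Set X) : ℝ :=
  sInf {s : ℝ | 0 ≤ s ∧ ∀ ε : ℝ, 0 < ε → ∀ δ₀ : ℝ, 0 < δ₀ → ∃ δ : ℝ, 0 < δ ∧ δ < δ₀ ∧
    ∃ 𝒰 : Set (Set X), 𝒰.Countable ∧ E ⊆ ⋃₀ 𝒰 ∧
      (∀ U ∈ 𝒰, δ ≤ diam U ∧ diam U ≤ δ ^ θ) ∧
      ∑' U : 𝒰, ENNReal.ofReal (diam (U : Set X) ^ s) ≤ ENNReal.ofReal ε}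

/-- The attenuated topologist's sine curve
`T_{p,q} = {(t^{-p}, t^{-pq} sin(πt)) : t ≥ 1} ⊆ ℝ²`. -/
noncomputable def attenTopSine (p q : ℝ) : Set (EuclideanSpace ℝ (Fin 2)) :=
  {x | ∃ t : ℝ, 1 ≤ t ∧ x 0 = t ^ (-p) ∧ x 1 = t ^ (-(p * q)) * Real.sin (Real.pi * t)}

open Topology
open scoped ENNReal Finset

local notation "ℝ²" => EuclideanSpace ℝ (Fin 2)

section IntermediateDimension

variable {X : Type*} [PseudoMetricSpace X]

def HasIntermediateCover (θ s δ ε : ℝ) (E : Set X) : Prop :=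
  ∃ 𝒰 : Set (Set X), 𝒰.Countable ∧ E ⊆ ⋃₀ 𝒰 ∧
    (∀ U ∈ 𝒰, δ ≤ diam U ∧ diam U ≤ δ ^ θ) ∧
    ∑' U : 𝒰, ENNReal.ofReal (diam (U : Set X) ^ s) ≤ ENNReal.ofReal ε

lemma HasIntermediateCover.mono {θ s δ ε ε' : ℝ} {E : Set X}
    (h : HasIntermediateCover θ s δ ε E) (hε : ε ≤ ε') : HasIntermediateCover θ s δ ε' E :=
  let ⟨𝒰, hc, hcov, hdiam, hsum⟩ := h
  ⟨𝒰, hc, hcov, hdiam, hsum.trans (ENNReal.ofReal_le_ofReal hε)⟩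

theorem lodim_eq_and_updim_eq_of {θ d : ℝ} {E : Set X} (hd : 0 ≤ d)
    (hup : ∀ s, d < s → ∀ ε, 0 < ε → ∀ᶠ δ in 𝓝[>] 0, HasIntermediateCover θ s δ ε E)
    (hlo : ∀ s, 0 ≤ s → s < d → ∃ ε > 0, ∀ᶠ δ in 𝓝[>] 0, ¬HasIntermediateCover θ s δ ε E) :
    lodim θ E = d ∧ updim θ E = d := by
  set Su := {s : ℝ | 0 ≤ s ∧ ∀ ε : ℝ, 0 < ε → ∃ δ₀ : ℝ, 0 < δ₀ ∧ ∀ δ : ℝ, 0 < δ → δ < δ₀ →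
    HasIntermediateCover θ s δ ε E}
  set Sl := {s : ℝ | 0 ≤ s ∧ ∀ ε : ℝ, 0 < ε → ∀ δ₀ : ℝ, 0 < δ₀ → ∃ δ : ℝ, 0 < δ ∧ δ < δ₀ ∧
    HasIntermediateCover θ s δ ε E}
  have hSu : Ioi d ⊆ Su := fun s hs ↦ ⟨hd.trans hs.le, fun ε hε ↦ by
    obtain ⟨δ₀, hδ₀, h⟩ := (nhdsGT_basis 0).eventually_iff.1 (hup s hs ε hε)
    exact ⟨δ₀, hδ₀, fun δ h0 h1 ↦ h ⟨h0, h1⟩⟩⟩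
  have hSl : Su ⊆ Sl := fun s ⟨hs, h⟩ ↦ ⟨hs, fun ε hε δ₁ hδ₁ ↦ by
    obtain ⟨δ₀, hδ₀, h⟩ := h ε hε
    exact ⟨min δ₀ δ₁ / 2, by positivity, by linarith [min_le_right δ₀ δ₁],
      h _ (by positivity) (by linarith [min_le_left δ₀ δ₁])⟩⟩
  have hSl_ge : ∀ s ∈ Sl, d ≤ s := by
    intro s ⟨hs0, h⟩
    by_contra! hsd
    obtain ⟨ε, hε, hev⟩ := hlo s hs0 hsd
    obtain ⟨δ₀, hδ₀, hev⟩ := (nhdsGT_basis 0).eventually_iff.1 hev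
    obtain ⟨δ, hδ, hδδ₀, hcover⟩ := h ε hε δ₀ hδ₀
    exact hev ⟨hδ, hδδ₀⟩ hcover
  have hbdd : BddBelow Su := ⟨0, fun _ h ↦ h.1⟩
  have hup_le : updim θ E ≤ d := (csInf_le_csInf hbdd nonempty_Ioi hSu).trans_eq csInf_Ioi
  have hlo_ge : d ≤ lodim θ E := le_csInf (nonempty_Ioi.mono (hSu.trans hSl)) hSl_ge
  have hlo_le : lodim θ E ≤ updim θ E :=
    csInf_le_csInf ⟨0, fun _ h ↦ h.1⟩ (nonempty_Ioi.mono hSu) hSl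
  constructor <;> linarith

end IntermediateDimension

section BallCovers

lemma hasIntermediateCover_of_subset_closedBalls {E : Type*} [NormedAddCommGroup E]
    [NormedSpace ℝ E] [Nontrivial E] {θ s δ : ℝ} {S : Set E} (hδ : 0 < δ) (hδθ : δ ≤ δ ^ θ)
    (C₁ C₂ : Finset E)
    (hS : S ⊆ (⋃ c ∈ C₁, closedBall c (δ / 2)) ∪ ⋃ c ∈ C₂, closedBall c (δ ^ θ / 2)) :
    HasIntermediateCover θ s δ (#C₁ * δ ^ s + #C₂ * (δ ^ θ) ^ s) S := by
  classical
  have hδθ₀ : 0 ≤ δ ^ θ := hδ.le.trans hδθ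
  set 𝒰₁ := C₁.image (closedBall · (δ / 2))
  set 𝒰₂ := C₂.image (closedBall · (δ ^ θ / 2))
  refine ⟨↑𝒰₁ ∪ ↑𝒰₂, (𝒰₁.finite_toSet.union 𝒰₂.finite_toSet).countable, ?_, ?_, ?_⟩
  · rwa [sUnion_union, Finset.coe_image, Finset.coe_image, sUnion_image, sUnion_image]
  · rintro U (hU | hU) <;> obtain ⟨c, -, rfl⟩ := Finset.mem_image.1 hU
    · rw [diam_closedBall_eq c (by positivity)]
      constructor <;> linarith
    · rw [diam_closedBall_eq c (by positivity)]
      constructor <;> linarith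
  · have h₁ : ∑ U ∈ 𝒰₁, ENNReal.ofReal (diam U ^ s) ≤ #C₁ * ENNReal.ofReal (δ ^ s) := by
      refine (Finset.sum_image_le_of_nonneg fun _ _ ↦ zero_le).trans_eq ?_
      simp [diam_closedBall_eq _ (half_pos hδ).le, mul_div_cancel₀]
    have h₂ : ∑ U ∈ 𝒰₂, ENNReal.ofReal (diam U ^ s) ≤ #C₂ * ENNReal.ofReal ((δ ^ θ) ^ s) := by
      refine (Finset.sum_image_le_of_nonneg fun _ _ ↦ zero_le).trans_eq ?_
      simp [diam_closedBall_eq _ (div_nonneg hδθ₀ two_pos.le), mul_div_cancel₀]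
    calc ∑' U : ↑((𝒰₁ : Set (Set E)) ∪ 𝒰₂), ENNReal.ofReal (diam (U : Set E) ^ s)
        ≤ ∑ U ∈ 𝒰₁, ENNReal.ofReal (diam U ^ s) + ∑ U ∈ 𝒰₂, ENNReal.ofReal (diam U ^ s) := by
          rw [← Finset.tsum_subtype' 𝒰₁, ← Finset.tsum_subtype' 𝒰₂]
          exact ENNReal.tsum_union_le (fun U ↦ ENNReal.ofReal (diam U ^ s)) _ _
      _ ≤ #C₁ * ENNReal.ofReal (δ ^ s) + #C₂ * ENNReal.ofReal ((δ ^ θ) ^ s) := add_le_add h₁ h₂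
      _ = ENNReal.ofReal (#C₁ * δ ^ s + #C₂ * (δ ^ θ) ^ s) := by
          rw [ENNReal.ofReal_add (by positivity) (by positivity),
            ENNReal.ofReal_mul (by positivity), ENNReal.ofReal_mul (by positivity)]
          simp

lemma exists_mem_range_floor_div_mul_le {w x B : ℝ} (hw : 0 < w) (hx : 0 ≤ x) (hxB : x ≤ B) :
    ∃ i ∈ Finset.range (⌊B / w⌋₊ + 1), (i : ℝ) * w ≤ x ∧ x < (i + 1) * w := by
  refine ⟨⌊x / w⌋₊, Finset.mem_range.2 (Nat.lt_succ_of_le (Nat.floor_le_floor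
    (div_le_div_of_nonneg_right hxB hw.le))), ?_, ?_⟩
  · exact (le_div_iff₀ hw).1 (Nat.floor_le (div_nonneg hx hw.le))
  · exact (div_lt_iff₀ hw).1 (Nat.lt_floor_add_one _)

variable {X : Type*} [PseudoMetricSpace X]

lemma exists_finset_image_Icc_subset_biUnion_closedBall {f : ℝ → X} {a b K w : ℝ}
    (hK : 0 ≤ K) (hw : 0 < w)
    (hf : ∀ u ∈ Icc a b, ∀ v ∈ Icc a b, dist (f u) (f v) ≤ K * |u - v|) :
    ∃ C : Finset X, #C ≤ ⌊(b - a) / w⌋₊ + 1 ∧ f '' Icc a b ⊆ ⋃ c ∈ C, closedBall c (K * w) := by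
  classical
  refine ⟨(Finset.range (⌊(b - a) / w⌋₊ + 1)).image fun i : ℕ ↦ f (a + i * w),
    Finset.card_image_le.trans_eq (Finset.card_range _), ?_⟩
  rintro _ ⟨t, ht, rfl⟩
  obtain ⟨i, hi, hit, hti⟩ :=
    exists_mem_range_floor_div_mul_le hw (sub_nonneg.2 ht.1) (sub_le_sub_right ht.2 a)
  have hu : a + i * w ∈ Icc a b :=
    ⟨by nlinarith [hw, Nat.cast_nonneg (α := ℝ) i], by linarith [ht.2]⟩
  simp only [Finset.set_biUnion_finset_image, mem_iUnion₂, mem_closedBall]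
  refine ⟨i, hi, (hf t ht _ hu).trans (mul_le_mul_of_nonneg_left ?_ hK)⟩
  rw [abs_le]
  constructor <;> linarith

end BallCovers

section Plane

lemma dist_le_abs_sub_add_abs_sub (x y : ℝ²) : dist x y ≤ |x 0 - y 0| + |x 1 - y 1| := by
  rw [EuclideanSpace.dist_eq, Fin.sum_univ_two, Real.dist_eq, Real.dist_eq]
  refine Real.sqrt_le_iff.2 ⟨by positivity, ?_⟩
  nlinarith [abs_nonneg (x 0 - y 0), abs_nonneg (x 1 - y 1)]

lemma abs_apply_sub_apply_le_dist (x y : ℝ²) (i : Fin 2) : |x i - y i| ≤ dist x y := by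
  simpa [Real.dist_eq] using PiLp.dist_apply_le x y i

lemma exists_finset_subset_biUnion_closedBall_grid {S : Set ℝ²} {x₀ x₁ y₀ y₁ w : ℝ} (hw : 0 < w)
    (hS : ∀ z ∈ S, z 0 ∈ Icc x₀ x₁ ∧ z 1 ∈ Icc y₀ y₁) :
    ∃ C : Finset ℝ², #C ≤ (⌊(x₁ - x₀) / w⌋₊ + 1) * (⌊(y₁ - y₀) / w⌋₊ + 1) ∧
      S ⊆ ⋃ c ∈ C, closedBall c (2 * w) := by
  classical
  refine ⟨(Finset.range (⌊(x₁ - x₀) / w⌋₊ + 1) ×ˢ Finset.range (⌊(y₁ - y₀) / w⌋₊ + 1)).image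
    fun ij : ℕ × ℕ ↦ !₂[x₀ + ij.1 * w, y₀ + ij.2 * w], Finset.card_image_le.trans_eq (by simp), ?_⟩
  intro z hz
  obtain ⟨⟨hx₀, hx₁⟩, ⟨hy₀, hy₁⟩⟩ := hS z hz
  obtain ⟨i, hi, hix, hxi⟩ :=
    exists_mem_range_floor_div_mul_le hw (sub_nonneg.2 hx₀) (sub_le_sub_right hx₁ x₀)
  obtain ⟨j, hj, hjy, hyj⟩ :=
    exists_mem_range_floor_div_mul_le hw (sub_nonneg.2 hy₀) (sub_le_sub_right hy₁ y₀)
  simp only [Finset.set_biUnion_finset_image, mem_iUnion₂, mem_closedBall]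
  refine ⟨(i, j), Finset.mem_product.2 ⟨hi, hj⟩, (dist_le_abs_sub_add_abs_sub _ _).trans ?_⟩
  simp only [Matrix.cons_val_zero, Matrix.cons_val_one]
  rw [abs_of_nonneg (by linarith), abs_of_nonneg (by linarith)]
  linarith

end Plane

section RealInequalities

lemma rpow_le_rpow_neg_of_le {a t c e : ℝ} (ha : 1 ≤ a) (hat : a ≤ t) (he : 0 ≤ e) (hce : c ≤ -e) :
    t ^ c ≤ a ^ (-e) :=
  (Real.rpow_le_rpow_of_exponent_le (ha.trans hat) hce).trans
    (Real.rpow_le_rpow_of_nonpos (by linarith) hat (neg_nonpos.2 he))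

lemma mul_rpow_sub_one_le_rpow_sub_rpow {x r : ℝ} (hx : 1 ≤ x) (hr₀ : 0 ≤ r) (hr₁ : r ≤ 1) :
    r * x ^ (r - 1) ≤ x ^ r - (x - 1) ^ r := by
  have hx₀ : 0 < x := by linarith
  have hsplit : (x - 1) ^ r = x ^ r * (1 + -x⁻¹) ^ r := by
    rw [← Real.mul_rpow hx₀.le (by nlinarith [inv_mul_cancel₀ hx₀.ne', inv_le_one_of_one_le₀ hx])]
    congr 1
    field_simp
    ring
  have hbernoulli := rpow_one_add_le_one_add_mul_self
    (by linarith [inv_le_one_of_one_le₀ hx] : -1 ≤ -x⁻¹) hr₀ hr₁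
  rw [hsplit, Real.rpow_sub_one hx₀.ne', div_eq_mul_inv]
  nlinarith [mul_le_mul_of_nonneg_left hbernoulli (Real.rpow_nonneg hx₀.le r)]

lemma sum_Icc_rpow_neg_le {β : ℝ} (hβ₀ : 0 ≤ β) (hβ₁ : β < 1) (N : ℕ) :
    ∑ n ∈ Finset.Icc 1 N, (n : ℝ) ^ (-β) ≤ (N : ℝ) ^ (1 - β) / (1 - β) := by
  induction N with
  | zero => simp [Real.zero_rpow (by linarith : 1 - β ≠ 0)]
  | succ N ih =>
    rw [Finset.sum_Icc_succ_top (by omega), Nat.cast_succ]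
    have step := mul_rpow_sub_one_le_rpow_sub_rpow (x := (N : ℝ) + 1) (r := 1 - β)
      (by linarith [N.cast_nonneg (α := ℝ)]) (by linarith) (by linarith)
    rw [add_sub_cancel_right, show 1 - β - 1 = -β by ring] at step
    rw [le_div_iff₀ (by linarith)] at ih ⊢
    nlinarith

lemma le_rpow_neg_sub_rpow_neg {p a b M : ℝ} (hp : 0 < p) (ha : 0 < a) (hab : a ≤ b)
    (hbM : b ≤ M) : p * M ^ (-p - 1) * (b - a) ≤ a ^ (-p) - b ^ (-p) := by
  rcases hab.eq_or_lt with rfl | hab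
  · simp
  have hderiv : ∀ x ∈ Ioo a b, HasDerivAt (fun u : ℝ ↦ u ^ (-p)) (-p * x ^ (-p - 1)) x :=
    fun x hx ↦ Real.hasDerivAt_rpow_const (Or.inl (ha.trans hx.1).ne')
  have hcont : ContinuousOn (fun u : ℝ ↦ u ^ (-p)) (Icc a b) := fun x hx ↦
    (Real.continuousAt_rpow_const x _ (Or.inl (ha.trans_le hx.1).ne')).continuousWithinAt
  obtain ⟨ξ, hξ, hslope⟩ := exists_hasDerivAt_eq_slope _ _ hab hcont hderiv
  rw [eq_div_iff (sub_pos.2 hab).ne'] at hslope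
  have hξM : M ^ (-p - 1) ≤ ξ ^ (-p - 1) :=
    Real.rpow_le_rpow_of_nonpos (ha.trans hξ.1) (hξ.2.le.trans hbM) (by linarith)
  nlinarith [mul_le_mul_of_nonneg_left hξM (by nlinarith : 0 ≤ p * (b - a))]

lemma exists_nat_le_two_mul {x : ℝ} (hx : 1 ≤ x) : ∃ N : ℕ, x ≤ N ∧ (N : ℝ) ≤ 2 * x :=
  ⟨⌈x⌉₊, Nat.le_ceil x, by linarith [Nat.ceil_lt_add_one (by linarith : 0 ≤ x)]⟩

lemma rpow_le_max_of_mem_Icc {a b r : ℝ} (ha : 0 < a) (hr : r ∈ Icc a b) (e : ℝ) :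
    r ^ e ≤ max (a ^ e) (b ^ e) := by
  rcases le_total e 0 with he | he
  · exact (Real.rpow_le_rpow_of_nonpos ha hr.1 he).trans (le_max_left _ _)
  · exact (Real.rpow_le_rpow (by linarith [hr.1]) hr.2 he).trans (le_max_right _ _)

lemma add_one_mul_add_one_le_mul_rpow {a b r g h M s : ℝ} (ha : 0 < a) (hr : r ∈ Icc a b)
    (hg : 0 < g) (hh : 0 < h) (hs₀ : 0 ≤ s) (hs₂ : s ≤ 2)
    (H₁ : 8 * b ^ (2 - s) ≤ M * g * h) (H₂ : 8 * max (a ^ (1 - s)) (b ^ (1 - s)) ≤ M * g)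
    (H₃ : 8 * max (a ^ (1 - s)) (b ^ (1 - s)) ≤ M * h) (H₄ : 8 ≤ M * a ^ s) :
    (r / g + 1) * (r / h + 1) ≤ M / 2 * r ^ s := by
  have hr₀ : 0 < r := ha.trans_le hr.1
  have hrs : 0 < r ^ s := Real.rpow_pos_of_pos hr₀ s
  have hsplit : ∀ e : ℝ, r ^ (e - s) * r ^ s = r ^ e := fun e ↦ by
    rw [← Real.rpow_add hr₀, sub_add_cancel]
  have hr₁ : r ^ (1 - s) ≤ max (a ^ (1 - s)) (b ^ (1 - s)) := rpow_le_max_of_mem_Icc ha hr _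
  have hr₂ : r ^ (2 - s) ≤ b ^ (2 - s) :=
    Real.rpow_le_rpow hr₀.le hr.2 (by linarith)
  have T₁ : r * r ≤ M / 8 * r ^ s * (g * h) := by
    have := hsplit 2
    rw [Real.rpow_two] at this
    nlinarith [mul_le_mul_of_nonneg_right hr₂ hrs.le]
  have T₂ : r ≤ M / 8 * r ^ s * g := by
    have := hsplit 1
    rw [Real.rpow_one] at this
    nlinarith [mul_le_mul_of_nonneg_right hr₁ hrs.le]
  have T₃ : r ≤ M / 8 * r ^ s * h := by
    have := hsplit 1
    rw [Real.rpow_one] at this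
    nlinarith [mul_le_mul_of_nonneg_right hr₁ hrs.le]
  have T₄ : 1 ≤ M / 8 * r ^ s := by
    have has : 0 < a ^ s := Real.rpow_pos_of_pos ha s
    have hM : 0 < M := by nlinarith
    nlinarith [mul_le_mul_of_nonneg_left (Real.rpow_le_rpow ha.le hr.1 hs₀) hM.le]
  have hexpand : (r / g + 1) * (r / h + 1) = r * r / (g * h) + r / g + r / h + 1 := by
    field_simp
    ring
  rw [hexpand]
  linarith [(div_le_iff₀ (by positivity)).2 T₁, (div_le_iff₀ hg).2 T₂, (div_le_iff₀ hh).2 T₃]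

lemma eventually_mul_rpow_le_mul_rpow {e₀ e₁ : ℝ} (he : e₀ < e₁) (C : ℝ) {c : ℝ} (hc : 0 < c) :
    ∀ᶠ δ in 𝓝[>] (0 : ℝ), C * δ ^ e₁ ≤ c * δ ^ e₀ := by
  have hlim : Tendsto (fun δ : ℝ ↦ C * δ ^ (e₁ - e₀)) (𝓝[>] 0) (𝓝 0) := by
    have := ((Real.continuousAt_rpow_const 0 _ (Or.inr (sub_pos.2 he).le)).tendsto.mono_left
      (nhdsWithin_le_nhds (s := Ioi 0))).const_mul C
    rwa [Real.zero_rpow (sub_pos.2 he).ne', mul_zero] at this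
  filter_upwards [hlim.eventually_le_const hc, self_mem_nhdsWithin] with δ hδ (hδ₀ : 0 < δ)
  calc C * δ ^ e₁ = C * δ ^ (e₁ - e₀) * δ ^ e₀ := by
        rw [mul_assoc, ← Real.rpow_add hδ₀, sub_add_cancel]
    _ ≤ c * δ ^ e₀ := mul_le_mul_of_nonneg_right hδ (Real.rpow_nonneg hδ₀.le _)

end RealInequalities

section Packing

lemma card_le_floor_add_one_of_forall_sub_le {S : Finset ℕ} {D : ℝ}
    (h : ∀ a ∈ S, ∀ b ∈ S, (b : ℝ) - a ≤ D) : #S ≤ ⌊D⌋₊ + 1 := by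
  rcases S.eq_empty_or_nonempty with rfl | hS
  · simp
  set m := S.min' hS
  have hsub : S ⊆ Finset.Icc m (m + ⌊D⌋₊) := fun b hb ↦ by
    have hmb : m ≤ b := S.min'_le b hb
    refine Finset.mem_Icc.2 ⟨hmb, ?_⟩
    have : b - m ≤ ⌊D⌋₊ := Nat.le_floor (by push_cast [hmb]; exact h m (S.min'_mem hS) b hb)
    omega
  have := Finset.card_le_card hsub
  rw [Nat.card_Icc] at this
  omega

variable {X : Type*}

open Classical in
lemma card_filter_mem_le_of_separated [PseudoMetricSpace X] {P : ℕ × ℕ → X}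
    {I : Finset (ℕ × ℕ)} {g h : ℝ} (hg : 0 < g) (hh : 0 < h)
    (hsep₁ : ∀ a ∈ I, ∀ b ∈ I, g * ((b.1 : ℝ) - a.1) ≤ dist (P a) (P b))
    (hsep₂ : ∀ a ∈ I, ∀ b ∈ I, a.1 = b.1 → h * ((b.2 : ℝ) - a.2) ≤ dist (P a) (P b))
    {U : Set X} (hU : Bornology.IsBounded U) :
    (#{a ∈ I | P a ∈ U} : ℝ) ≤ (diam U / g + 1) * (diam U / h + 1) := by
  set F := {a ∈ I | P a ∈ U}
  have hdist : ∀ a ∈ F, ∀ b ∈ F, dist (P a) (P b) ≤ diam U := fun a ha b hb ↦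
    dist_le_diam_of_mem hU (Finset.mem_filter.1 ha).2 (Finset.mem_filter.1 hb).2
  have hrows : #(F.image Prod.fst) ≤ ⌊diam U / g⌋₊ + 1 := by
    refine card_le_floor_add_one_of_forall_sub_le ?_
    simp only [Finset.mem_image]
    rintro _ ⟨a, ha, rfl⟩ _ ⟨b, hb, rfl⟩
    rw [le_div_iff₀' hg]
    exact (hsep₁ a (Finset.mem_filter.1 ha).1 b (Finset.mem_filter.1 hb).1).trans (hdist a ha b hb)
  have hcols : ∀ n ∈ F.image Prod.fst, #{a ∈ F | a.1 = n} ≤ ⌊diam U / h⌋₊ + 1 := by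
    intro n _
    rw [← Finset.card_image_of_injOn fun a ha b hb hab ↦
      Prod.ext ((Finset.mem_filter.1 ha).2.trans (Finset.mem_filter.1 hb).2.symm) hab]
    refine card_le_floor_add_one_of_forall_sub_le ?_
    simp only [Finset.mem_image, Finset.mem_filter]
    rintro _ ⟨a, ⟨ha, han⟩, rfl⟩ _ ⟨b, ⟨hb, hbn⟩, rfl⟩
    rw [le_div_iff₀' hh]
    exact (hsep₂ a (Finset.mem_filter.1 ha).1 b (Finset.mem_filter.1 hb).1
      (han.trans hbn.symm)).trans (hdist a ha b hb)
  have hr : 0 ≤ diam U := diam_nonneg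
  calc (#F : ℝ) ≤ ((⌊diam U / h⌋₊ + 1) * (⌊diam U / g⌋₊ + 1) : ℕ) := by
        exact_mod_cast (Finset.card_le_mul_card_image F _ hcols).trans (Nat.mul_le_mul_left _ hrows)
    _ ≤ (diam U / h + 1) * (diam U / g + 1) := by
        push_cast
        gcongr <;> exact Nat.floor_le (by positivity)
    _ = (diam U / g + 1) * (diam U / h + 1) := mul_comm _ _

open Classical in
lemma card_le_tsum_of_card_filter_le {ι : Type*} {I : Finset ι} {P : ι → X} {𝒰 : Set (Set X)}
    (hcov : ∀ i ∈ I, P i ∈ ⋃₀ 𝒰) {w : Set X → ℝ≥0∞}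
    (hw : ∀ U ∈ 𝒰, (#{i ∈ I | P i ∈ U} : ℝ≥0∞) ≤ w U) :
    (#I : ℝ≥0∞) ≤ ∑' U : 𝒰, w U := by
  choose V hV using fun i (hi : i ∈ I) ↦ mem_sUnion.1 (hcov i hi)
  set T : Finset 𝒰 := I.attach.image fun i ↦ ⟨V i.1 i.2, (hV i.1 i.2).1⟩
  have hI : I ⊆ T.biUnion fun U ↦ {i ∈ I | P i ∈ (U : Set X)} := fun i hi ↦
    Finset.mem_biUnion.2 ⟨_, Finset.mem_image_of_mem _ (Finset.mem_attach I ⟨i, hi⟩),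
      Finset.mem_filter.2 ⟨hi, (hV i hi).2⟩⟩
  calc (#I : ℝ≥0∞) ≤ ∑ U ∈ T, (#{i ∈ I | P i ∈ (U : Set X)} : ℝ≥0∞) := by
        exact_mod_cast (Finset.card_le_card hI).trans Finset.card_biUnion_le
    _ ≤ ∑ U ∈ T, w U := Finset.sum_le_sum fun U _ ↦ hw U U.2
    _ ≤ ∑' U : 𝒰, w U := ENNReal.sum_le_tsum T

end Packing

section Curve

open Real

variable {p q : ℝ}

noncomputable def attenTopSineCurve (p q t : ℝ) : ℝ² :=
  !₂[t ^ (-p), t ^ (-(p * q)) * sin (π * t)]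

@[simp] lemma attenTopSineCurve_apply_zero (p q t : ℝ) :
    attenTopSineCurve p q t 0 = t ^ (-p) := by
  simp [attenTopSineCurve]

@[simp] lemma attenTopSineCurve_apply_one (p q t : ℝ) :
    attenTopSineCurve p q t 1 = t ^ (-(p * q)) * sin (π * t) := by
  simp [attenTopSineCurve]

lemma attenTopSine_eq_image (p q : ℝ) : attenTopSine p q = attenTopSineCurve p q '' Ici 1 := by
  ext x
  constructor
  · rintro ⟨t, ht, h₀, h₁⟩
    refine ⟨t, ht, ?_⟩
    ext i
    fin_cases i <;> simp [h₀, h₁]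
  · rintro ⟨t, ht, rfl⟩
    exact ⟨t, ht, by simp, by simp⟩

lemma dist_attenTopSineCurve_le (hp : 0 < p) (hq : 0 < q) (hpq : p * q < 1) {a u v : ℝ}
    (ha : 1 ≤ a) (hu : a ≤ u) (hv : a ≤ v) :
    dist (attenTopSineCurve p q u) (attenTopSineCurve p q v) ≤
      (p + p * q + π) * a ^ (-(p * q)) * |u - v| := by
  have hpq₀ : 0 ≤ p * q := by positivity
  have ht₀ : ∀ t ∈ Ici a, t ≠ 0 := fun t ht ↦ by linarith [mem_Ici.1 ht]
  have hx : ∀ t ∈ Ici a, HasDerivWithinAt (fun t : ℝ ↦ t ^ (-p)) (-p * t ^ (-p - 1)) (Ici a) t :=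
    fun t ht ↦ (hasDerivAt_rpow_const (Or.inl (ht₀ t ht))).hasDerivWithinAt
  have hy : ∀ t ∈ Ici a, HasDerivWithinAt (fun t : ℝ ↦ t ^ (-(p * q)) * sin (π * t))
      (-(p * q) * t ^ (-(p * q) - 1) * sin (π * t) + t ^ (-(p * q)) * (cos (π * t) * (π * 1)))
      (Ici a) t := fun t ht ↦
    ((hasDerivAt_rpow_const (Or.inl (ht₀ t ht))).mul
      ((hasDerivAt_id t).const_mul π).sin).hasDerivWithinAt
  have hx' : ∀ t ∈ Ici a, ‖-p * t ^ (-p - 1)‖ ≤ p * a ^ (-(p * q)) := fun t ht ↦ by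
    rw [norm_mul, norm_neg, Real.norm_of_nonneg hp.le,
      Real.norm_of_nonneg (rpow_nonneg (by linarith [mem_Ici.1 ht]) _)]
    gcongr
    exact rpow_le_rpow_neg_of_le ha ht hpq₀ (by nlinarith)
  have hy' : ∀ t ∈ Ici a, ‖-(p * q) * t ^ (-(p * q) - 1) * sin (π * t) +
      t ^ (-(p * q)) * (cos (π * t) * (π * 1))‖ ≤ (p * q + π) * a ^ (-(p * q)) := fun t ht ↦ by
    have h₁ : t ^ (-(p * q) - 1) ≤ a ^ (-(p * q)) := rpow_le_rpow_neg_of_le ha ht hpq₀ (by linarith)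
    have h₂ : t ^ (-(p * q)) ≤ a ^ (-(p * q)) := rpow_le_rpow_neg_of_le ha ht hpq₀ le_rfl
    have ht' : 0 < t := by linarith [mem_Ici.1 ht]
    rw [Real.norm_eq_abs]
    refine (abs_add_le _ _).trans ?_
    simp only [abs_mul, abs_neg, abs_of_nonneg hpq₀, abs_of_pos (rpow_pos_of_pos ht' _),
      abs_of_pos pi_pos, mul_one]
    have e₁ : p * q * t ^ (-(p * q) - 1) * |sin (π * t)| ≤ p * q * a ^ (-(p * q)) * 1 := by
      gcongr
      exact abs_sin_le_one _
    have e₂ : t ^ (-(p * q)) * (|cos (π * t)| * π) ≤ a ^ (-(p * q)) * (1 * π) := by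
      gcongr
      exact abs_cos_le_one _
    linarith
  have h₀ := (convex_Ici a).norm_image_sub_le_of_norm_hasDerivWithin_le hx hx' hv hu
  have h₁ := (convex_Ici a).norm_image_sub_le_of_norm_hasDerivWithin_le hy hy' hv hu
  simp only [Real.norm_eq_abs] at h₀ h₁
  calc dist (attenTopSineCurve p q u) (attenTopSineCurve p q v)
      ≤ |u ^ (-p) - v ^ (-p)| + |u ^ (-(p * q)) * sin (π * u) - v ^ (-(p * q)) * sin (π * v)| := by
        simpa using dist_le_abs_sub_add_abs_sub (attenTopSineCurve p q u) (attenTopSineCurve p q v)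
    _ ≤ p * a ^ (-(p * q)) * |u - v| + (p * q + π) * a ^ (-(p * q)) * |u - v| := add_le_add h₀ h₁
    _ = (p + p * q + π) * a ^ (-(p * q)) * |u - v| := by ring

lemma exists_finset_image_Icc_one_subset (hp : 0 < p) (hq : 0 < q) (hpq : p * q < 1) (N : ℕ)
    {δ : ℝ} (hδ : 0 < δ) :
    ∃ C : Finset ℝ², (#C : ℝ) ≤ 2 * (p + p * q + π) / ((1 - p * q) * δ) * N ^ (1 - p * q) + N ∧
      attenTopSineCurve p q '' Icc 1 N ⊆ ⋃ c ∈ C, closedBall c (δ / 2) := by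
  classical
  set L := p + p * q + π
  have harc : ∀ n : ℕ, 1 ≤ n → ∃ C : Finset ℝ², (#C : ℝ) ≤ 2 * L * n ^ (-(p * q)) / δ + 1 ∧
      attenTopSineCurve p q '' Icc n (n + 1) ⊆ ⋃ c ∈ C, closedBall c (δ / 2) := by
    intro n hn
    have hn' : (1 : ℝ) ≤ n := by exact_mod_cast hn
    set K := L * (n : ℝ) ^ (-(p * q))
    have hK : 0 < K := mul_pos (by positivity) (rpow_pos_of_pos (by linarith) _)
    obtain ⟨C, hC, hcov⟩ := exists_finset_image_Icc_subset_biUnion_closedBall hK.le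
      (a := n) (b := n + 1) (w := δ / (2 * K)) (by positivity) fun u hu v hv ↦
        dist_attenTopSineCurve_le hp hq hpq hn' hu.1 hv.1
    refine ⟨C, ?_, ?_⟩
    · rw [add_sub_cancel_left, one_div_div] at hC
      calc (#C : ℝ) ≤ ⌊2 * K / δ⌋₊ + 1 := by exact_mod_cast hC
        _ ≤ 2 * L * n ^ (-(p * q)) / δ + 1 := by
          rw [mul_assoc 2 L]
          linarith [Nat.floor_le (a := 2 * K / δ) (by positivity)]
    · convert hcov using 4
      field_simp
  choose! C hC hcov using harc
  refine ⟨(Finset.Icc 1 N).biUnion C, ?_, ?_⟩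
  · calc (#((Finset.Icc 1 N).biUnion C) : ℝ) ≤ ∑ n ∈ Finset.Icc 1 N, (#(C n) : ℝ) := by
          exact_mod_cast Finset.card_biUnion_le
      _ ≤ ∑ n ∈ Finset.Icc 1 N, (2 * L / δ * (n : ℝ) ^ (-(p * q)) + 1) :=
          Finset.sum_le_sum fun n hn ↦ (hC n (Finset.mem_Icc.1 hn).1).trans_eq (by ring)
      _ ≤ 2 * L / δ * ((N : ℝ) ^ (1 - p * q) / (1 - p * q)) + N := by
          rw [Finset.sum_add_distrib, ← Finset.mul_sum]
          simp only [Finset.sum_const, Nat.card_Icc, add_tsub_cancel_right, nsmul_eq_mul, mul_one]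
          gcongr
          exact sum_Icc_rpow_neg_le (by positivity) hpq N
      _ = 2 * L / ((1 - p * q) * δ) * N ^ (1 - p * q) + N := by
          field_simp
  · rintro _ ⟨t, ht, rfl⟩
    have hn : 1 ≤ ⌊t⌋₊ := Nat.le_floor (by exact_mod_cast ht.1)
    have hnN : ⌊t⌋₊ ≤ N := Nat.floor_le_of_le ht.2
    have hmem := hcov ⌊t⌋₊ hn
      ⟨t, ⟨Nat.floor_le (by linarith [ht.1]), (Nat.lt_floor_add_one t).le⟩, rfl⟩
    rw [Finset.set_biUnion_biUnion]
    exact mem_iUnion₂.2 ⟨⌊t⌋₊, Finset.mem_Icc.2 ⟨hn, hnN⟩, hmem⟩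

lemma exists_finset_image_Ici_subset (hp : 0 < p) (hq : 0 < q) {a ρ : ℝ} (ha : 1 ≤ a)
    (hρ : 0 < ρ) :
    ∃ C : Finset ℝ², (#C : ℝ) ≤ (2 * a ^ (-p) / ρ + 1) * (4 * a ^ (-(p * q)) / ρ + 1) ∧
      attenTopSineCurve p q '' Ici a ⊆ ⋃ c ∈ C, closedBall c ρ := by
  have hpq₀ : 0 ≤ p * q := by positivity
  have hbox : ∀ z ∈ attenTopSineCurve p q '' Ici a,
      z 0 ∈ Icc 0 (a ^ (-p)) ∧ z 1 ∈ Icc (-a ^ (-(p * q))) (a ^ (-(p * q))) := by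
    rintro _ ⟨t, ht, rfl⟩
    have ht₀ : 0 < t := by linarith [mem_Ici.1 ht]
    have hy : |t ^ (-(p * q)) * sin (π * t)| ≤ a ^ (-(p * q)) := by
      rw [abs_mul, abs_of_pos (rpow_pos_of_pos ht₀ _), ← mul_one (a ^ (-(p * q)))]
      exact mul_le_mul (rpow_le_rpow_neg_of_le ha ht hpq₀ le_rfl) (abs_sin_le_one _)
        (abs_nonneg _) (rpow_nonneg (by linarith) _)
    simp only [attenTopSineCurve_apply_zero, attenTopSineCurve_apply_one, Set.mem_Icc]
    exact ⟨⟨(rpow_pos_of_pos ht₀ _).le, rpow_le_rpow_neg_of_le ha ht hp.le le_rfl⟩, abs_le.1 hy⟩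
  obtain ⟨C, hC, hcov⟩ := exists_finset_subset_biUnion_closedBall_grid (half_pos hρ) hbox
  refine ⟨C, ?_, by rwa [mul_div_cancel₀ _ two_ne_zero] at hcov⟩
  rw [sub_zero, sub_neg_eq_add, ← two_mul] at hC
  have hA := Nat.floor_le (a := a ^ (-p) / (ρ / 2)) (by positivity)
  have hB := Nat.floor_le (a := 2 * a ^ (-(p * q)) / (ρ / 2)) (by positivity)
  calc (#C : ℝ) ≤ (⌊a ^ (-p) / (ρ / 2)⌋₊ + 1) * (⌊2 * a ^ (-(p * q)) / (ρ / 2)⌋₊ + 1) := by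
        exact_mod_cast hC
    _ ≤ (a ^ (-p) / (ρ / 2) + 1) * (2 * a ^ (-(p * q)) / (ρ / 2) + 1) := by gcongr
    _ = (2 * a ^ (-p) / ρ + 1) * (4 * a ^ (-(p * q)) / ρ + 1) := by
        field_simp
        ring

lemma exists_attenTopSineCurve_apply_one_eq {n : ℕ} (hn : 1 ≤ n) {v : ℝ} (hv₀ : 0 ≤ v)
    (hv : v ≤ ((n : ℝ) + 1 / 2) ^ (-(p * q))) :
    ∃ t ∈ Icc (n : ℝ) (n + 1 / 2), attenTopSineCurve p q t 1 = (-1) ^ n * v := by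
  have hn₀ : (0 : ℝ) < n := by exact_mod_cast hn
  have hcont : ContinuousOn (fun t ↦ attenTopSineCurve p q t 1) (uIcc (n : ℝ) (n + 1 / 2)) := by
    rw [uIcc_of_le (by linarith)]
    simp only [attenTopSineCurve_apply_one]
    exact ContinuousOn.mul (fun t ht ↦ (continuousAt_rpow_const _ _
      (Or.inl (by linarith [ht.1]))).continuousWithinAt) (by fun_prop)
  have hstart : attenTopSineCurve p q n 1 = 0 := by
    simp [mul_comm π, sin_nat_mul_pi]
  have hend : attenTopSineCurve p q (n + 1 / 2) 1 = (-1) ^ n * ((n : ℝ) + 1 / 2) ^ (-(p * q)) := by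
    rw [attenTopSineCurve_apply_one, show π * ((n : ℝ) + 1 / 2) = n * π + π / 2 by ring,
      sin_add_pi_div_two, cos_nat_mul_pi, mul_comm]
  have hmem : (-1) ^ n * v ∈
      uIcc (attenTopSineCurve p q n 1) (attenTopSineCurve p q (n + 1 / 2) 1) := by
    rw [hstart, hend]
    rcases neg_one_pow_eq_or ℝ n with h | h <;> simp only [h, one_mul, neg_one_mul, mem_uIcc]
    · exact Or.inl ⟨hv₀, hv⟩
    · exact Or.inr ⟨by linarith, by linarith⟩
  obtain ⟨t, ht, hteq⟩ := intermediate_value_uIcc hcont hmem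
  exact ⟨t, by rwa [uIcc_of_le (by linarith)] at ht, hteq⟩

lemma le_attenTopSineCurve_apply_zero_sub (hp : 0 < p) {n n' : ℕ} {t t' M : ℝ} (hn : 1 ≤ n)
    (hnn' : n < n') (hn'M : (n' : ℝ) ≤ M) (ht : t ∈ Icc (n : ℝ) (n + 1 / 2)) (ht' : (n' : ℝ) ≤ t') :
    p / 2 * M ^ (-p - 1) * ((n' : ℝ) - n) ≤
      attenTopSineCurve p q t 0 - attenTopSineCurve p q t' 0 := by
  have hn₁ : (1 : ℝ) ≤ n := by exact_mod_cast hn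
  have hnn'₁ : (n : ℝ) + 1 ≤ n' := by exact_mod_cast hnn'
  have hgap := le_rpow_neg_sub_rpow_neg hp (a := n + 1 / 2) (by linarith) (by linarith) hn'M
  have hM : 0 < M ^ (-p - 1) := rpow_pos_of_pos (by linarith) _
  have hx : ((n : ℝ) + 1 / 2) ^ (-p) ≤ t ^ (-p) :=
    rpow_le_rpow_of_nonpos (by linarith [ht.1]) ht.2 (by linarith)
  have hx' : t' ^ (-p) ≤ (n' : ℝ) ^ (-p) := rpow_le_rpow_of_nonpos (by linarith) ht' (by linarith)
  simp only [attenTopSineCurve_apply_zero]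
  nlinarith [mul_pos hp hM]

lemma exists_separated_points (hp : 0 < p) (hq : 0 < q) {δ : ℝ} (hδ : 0 < δ) {N K : ℕ}
    (hN : 1 ≤ N) (hKN : 2 * δ * K ≤ (2 * N : ℝ) ^ (-(p * q))) :
    ∃ P : ℕ × ℕ → ℝ², (∀ a ∈ Finset.Ico N (2 * N) ×ˢ Finset.range K, P a ∈ attenTopSine p q) ∧
      (∀ a ∈ Finset.Ico N (2 * N) ×ˢ Finset.range K, ∀ b ∈ Finset.Ico N (2 * N) ×ˢ Finset.range K,
        p / 2 * (2 * N : ℝ) ^ (-p - 1) * ((b.1 : ℝ) - a.1) ≤ dist (P a) (P b)) ∧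
      (∀ a ∈ Finset.Ico N (2 * N) ×ˢ Finset.range K, ∀ b ∈ Finset.Ico N (2 * N) ×ˢ Finset.range K,
        a.1 = b.1 → 2 * δ * ((b.2 : ℝ) - a.2) ≤ dist (P a) (P b)) := by
  set I := Finset.Ico N (2 * N) ×ˢ Finset.range K
  have hI : ∀ a ∈ I, 1 ≤ a.1 ∧ (a.1 : ℝ) + 1 / 2 ≤ 2 * N ∧ (a.2 : ℝ) ≤ K := fun a ha ↦ by
    simp only [I, Finset.mem_product, Finset.mem_Ico, Finset.mem_range] at ha
    refine ⟨by omega, ?_, by exact_mod_cast ha.2.le⟩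
    have : (a.1 : ℝ) + 1 ≤ 2 * N := by exact_mod_cast ha.1.2
    linarith
  have hex : ∀ a ∈ I, ∃ t ∈ Icc (a.1 : ℝ) (a.1 + 1 / 2),
      attenTopSineCurve p q t 1 = (-1) ^ a.1 * (2 * δ * a.2) := fun a ha ↦ by
    obtain ⟨h₁, h₂, h₃⟩ := hI a ha
    refine exists_attenTopSineCurve_apply_one_eq h₁ (by positivity) ?_
    calc 2 * δ * (a.2 : ℝ) ≤ 2 * δ * K := by gcongr
      _ ≤ (2 * N : ℝ) ^ (-(p * q)) := hKN
      _ ≤ ((a.1 : ℝ) + 1 / 2) ^ (-(p * q)) :=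
        rpow_le_rpow_of_nonpos (by positivity) h₂ (by nlinarith)
  choose! T hT using hex
  refine ⟨fun a ↦ attenTopSineCurve p q (T a), fun a ha ↦ ?_, fun a ha b hb ↦ ?_,
    fun a ha b hb hab ↦ ?_⟩
  · rw [attenTopSine_eq_image]
    exact mem_image_of_mem _ (mem_Ici.2 (by linarith [(hT a ha).1.1,
      (by exact_mod_cast (hI a ha).1 : (1 : ℝ) ≤ a.1)]))
  · rcases lt_or_ge a.1 b.1 with h | h
    · refine (le_attenTopSineCurve_apply_zero_sub (q := q) hp (hI a ha).1 h ?_ (hT a ha).1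
        (hT b hb).1.1).trans ((le_abs_self _).trans (abs_apply_sub_apply_le_dist _ _ 0))
      linarith [(hI b hb).2.1]
    · refine le_trans (mul_nonpos_of_nonneg_of_nonpos (by positivity) ?_) dist_nonneg
      exact sub_nonpos.2 (by exact_mod_cast h)
  · have hy : |attenTopSineCurve p q (T a) 1 - attenTopSineCurve p q (T b) 1| =
        2 * δ * |(a.2 : ℝ) - b.2| := by
      rw [(hT a ha).2, (hT b hb).2, hab, ← mul_sub, abs_mul, abs_neg_one_pow, one_mul, ← mul_sub,
        abs_mul, abs_of_pos (by positivity : 0 < 2 * δ)]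
    calc 2 * δ * ((b.2 : ℝ) - a.2) ≤ 2 * δ * |(a.2 : ℝ) - b.2| := by
          rw [abs_sub_comm]
          gcongr
          exact le_abs_self _
      _ ≤ dist (attenTopSineCurve p q (T a)) (attenTopSineCurve p q (T b)) :=
          hy ▸ abs_apply_sub_apply_le_dist _ _ 1

lemma not_hasIntermediateCover_attenTopSine (hp : 0 < p) (hq : 0 < q) {θ s δ : ℝ} (hδ : 0 < δ)
    {N K : ℕ} (hN : 1 ≤ N) (hK : 1 ≤ K) (hKN : 2 * δ * K ≤ (2 * N : ℝ) ^ (-(p * q)))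
    (hcount : ∀ r ∈ Icc δ (δ ^ θ),
      (r / (p / 2 * (2 * N : ℝ) ^ (-p - 1)) + 1) * (r / (2 * δ) + 1) ≤ N * K / 2 * r ^ s) :
    ¬HasIntermediateCover θ s δ 1 (attenTopSine p q) := by
  classical
  rintro ⟨𝒰, -, hcov, hdiam, hsum⟩
  obtain ⟨P, hPT, hsep₁, hsep₂⟩ := exists_separated_points hp hq hδ hN hKN
  have hg : 0 < p / 2 * (2 * N : ℝ) ^ (-p - 1) := by positivity
  have hNK : (0 : ℝ) < N * K := by positivity
  have hw : ∀ U ∈ 𝒰, (#{a ∈ Finset.Ico N (2 * N) ×ˢ Finset.range K | P a ∈ U} : ℝ≥0∞) ≤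
      ENNReal.ofReal (N * K / 2) * ENNReal.ofReal (diam U ^ s) := fun U hU ↦ by
    obtain ⟨hδU, hUδ⟩ := hdiam U hU
    have hU : Bornology.IsBounded U := by
      by_contra hU
      rw [diam_eq_zero_of_unbounded hU] at hδU
      linarith
    rw [← ENNReal.ofReal_mul (by positivity), ← ENNReal.ofReal_natCast]
    exact ENNReal.ofReal_le_ofReal ((card_filter_mem_le_of_separated hg (by positivity)
      hsep₁ hsep₂ hU).trans (hcount _ ⟨hδU, hUδ⟩))
  have hcard := card_le_tsum_of_card_filter_le (fun a ha ↦ hcov (hPT a ha)) hw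
  rw [ENNReal.tsum_mul_left, Finset.card_product, Nat.card_Ico, Finset.card_range,
    show 2 * N - N = N by omega] at hcard
  have : ((N * K : ℕ) : ℝ≥0∞) ≤ ENNReal.ofReal (N * K / 2) * ENNReal.ofReal 1 :=
    hcard.trans (by gcongr)
  rw [← ENNReal.ofReal_mul (by positivity), mul_one, ← ENNReal.ofReal_natCast,
    ENNReal.ofReal_le_ofReal_iff (by positivity)] at this
  push_cast at this
  linarith

end Curve

section Dimension

open Real

variable {p q θ γ d : ℝ}

lemma exponent_bounds (hp : 0 < p) (hq : 0 < q) (hpq : p * q < 1) (hθ : 0 < θ) (hθ₁ : θ ≤ 1)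
    (hγ : 0 < γ) (hd : 1 + γ * (1 - p * q) = d) (hθd : γ * (p + p * q) = θ * (2 - d)) :
    γ * p ≤ θ ∧ γ * (p * q) ≤ θ ∧ γ * (p * q) < 1 ∧ γ ≤ d ∧ d < 2 := by
  have h₁ : 0 < γ * p := mul_pos hγ hp
  have h₂ : 0 < γ * (p * q) := mul_pos hγ (mul_pos hp hq)
  have hd₁ : 1 ≤ d := by nlinarith
  have hd₂ : d < 2 := by nlinarith
  refine ⟨by nlinarith, by nlinarith, by nlinarith, by nlinarith, hd₂⟩

lemma arcs_card_bound_le_rpow (hp : 0 < p) (hq : 0 < q) (hpq : p * q < 1) (hγd : γ ≤ d)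
    (hd : 1 + γ * (1 - p * q) = d) {δ : ℝ} (hδ : 0 < δ) (hδ₁ : δ < 1) {N : ℕ}
    (hN : (N : ℝ) ≤ 2 * δ ^ (-γ)) :
    2 * (p + p * q + π) / ((1 - p * q) * δ) * N ^ (1 - p * q) + N ≤
      (4 * (p + p * q + π) / (1 - p * q) + 2) * δ ^ (-d) := by
  have hpq₀ : 0 < p * q := mul_pos hp hq
  have hNpow : (N : ℝ) ^ (1 - p * q) ≤ 2 * δ ^ (-γ * (1 - p * q)) := by
    calc (N : ℝ) ^ (1 - p * q) ≤ (2 * δ ^ (-γ)) ^ (1 - p * q) :=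
          rpow_le_rpow (by positivity) hN (by linarith)
      _ = 2 ^ (1 - p * q) * δ ^ (-γ * (1 - p * q)) := by
          rw [mul_rpow (by norm_num) (by positivity), ← rpow_mul hδ.le]
      _ ≤ 2 * δ ^ (-γ * (1 - p * q)) := by
          gcongr
          simpa using rpow_le_rpow_of_exponent_le (by norm_num : (1 : ℝ) ≤ 2)
            (by linarith : 1 - p * q ≤ 1)
  calc 2 * (p + p * q + π) / ((1 - p * q) * δ) * N ^ (1 - p * q) + N
      ≤ 2 * (p + p * q + π) / ((1 - p * q) * δ) * (2 * δ ^ (-γ * (1 - p * q))) + 2 * δ ^ (-γ) :=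
        add_le_add (mul_le_mul_of_nonneg_left hNpow (by positivity)) hN
    _ = 4 * (p + p * q + π) / (1 - p * q) * δ ^ (-d) + 2 * δ ^ (-γ) := by
        rw [show -d = -γ * (1 - p * q) - 1 by linarith, rpow_sub_one hδ.ne']
        field_simp
        ring
    _ ≤ 4 * (p + p * q + π) / (1 - p * q) * δ ^ (-d) + 2 * δ ^ (-d) := by
        have := rpow_le_rpow_of_exponent_ge hδ hδ₁.le (neg_le_neg hγd)
        linarith
    _ = (4 * (p + p * q + π) / (1 - p * q) + 2) * δ ^ (-d) := by ring

lemma mul_rpow_neg_div_add_one_le {a c k δ : ℝ} (hc : 0 ≤ c) (hk : 0 ≤ k) (hcθ : γ * c ≤ θ)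
    (hδ : 0 < δ) (hδ₁ : δ < 1) (ha : δ ^ (-γ) ≤ a) :
    k * a ^ (-c) / (δ ^ θ / 2) + 1 ≤ (2 * k + 1) * δ ^ (γ * c - θ) := by
  have hac : a ^ (-c) ≤ δ ^ (γ * c) := by
    calc a ^ (-c) ≤ (δ ^ (-γ)) ^ (-c) := rpow_le_rpow_of_nonpos (by positivity) ha (by linarith)
      _ = δ ^ (γ * c) := by rw [← rpow_mul hδ.le]; ring_nf
  have h₁ : 1 ≤ δ ^ (γ * c - θ) := one_le_rpow_of_pos_of_le_one_of_nonpos hδ hδ₁.le (by linarith)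
  have h₂ : k * a ^ (-c) / (δ ^ θ / 2) ≤ 2 * k * δ ^ (γ * c - θ) := by
    rw [rpow_sub hδ, div_le_iff₀ (by positivity)]
    calc k * a ^ (-c) ≤ k * δ ^ (γ * c) := by gcongr
      _ = 2 * k * (δ ^ (γ * c) / δ ^ θ) * (δ ^ θ / 2) := by field_simp
  linarith

lemma tail_card_bound_le_rpow (hp : 0 < p) (hq : 0 < q) (hγp : γ * p ≤ θ)
    (hγpq : γ * (p * q) ≤ θ) (hθd : γ * (p + p * q) = θ * (2 - d)) {a δ : ℝ} (hδ : 0 < δ)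
    (hδ₁ : δ < 1) (ha : δ ^ (-γ) ≤ a) :
    (2 * a ^ (-p) / (δ ^ θ / 2) + 1) * (4 * a ^ (-(p * q)) / (δ ^ θ / 2) + 1) ≤
      45 * δ ^ (-(θ * d)) := by
  have ha₀ : 0 < a := (rpow_pos_of_pos hδ _).trans_le ha
  calc (2 * a ^ (-p) / (δ ^ θ / 2) + 1) * (4 * a ^ (-(p * q)) / (δ ^ θ / 2) + 1)
      ≤ ((2 * 2 + 1) * δ ^ (γ * p - θ)) * ((2 * 4 + 1) * δ ^ (γ * (p * q) - θ)) :=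
        mul_le_mul (mul_rpow_neg_div_add_one_le hp.le (by norm_num) hγp hδ hδ₁ ha)
          (mul_rpow_neg_div_add_one_le (by positivity) (by norm_num) hγpq hδ hδ₁ ha)
          (by positivity) (by positivity)
    _ = 45 * δ ^ (-(θ * d)) := by
        rw [mul_mul_mul_comm, ← rpow_add hδ]
        norm_num
        congr 1
        linear_combination hθd

lemma hasIntermediateCover_attenTopSine (hp : 0 < p) (hq : 0 < q) (hpq : p * q < 1)
    (hθ : 0 < θ) (hθ₁ : θ ≤ 1) (hγ : 0 < γ) (hd : 1 + γ * (1 - p * q) = d)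
    (hθd : γ * (p + p * q) = θ * (2 - d)) (s : ℝ) {δ : ℝ} (hδ : 0 < δ) (hδ₁ : δ < 1) :
    HasIntermediateCover θ s δ
      ((4 * (p + p * q + π) / (1 - p * q) + 2) * δ ^ (s - d) + 45 * δ ^ (θ * (s - d)))
      (attenTopSine p q) := by
  obtain ⟨hγp, hγpq, -, hγd, -⟩ := exponent_bounds hp hq hpq hθ hθ₁ hγ hd hθd
  have hδθ : δ ≤ δ ^ θ := by simpa using rpow_le_rpow_of_exponent_ge hδ hδ₁.le hθ₁
  have hX : 1 ≤ δ ^ (-γ) := one_le_rpow_of_pos_of_le_one_of_nonpos hδ hδ₁.le (by linarith)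
  obtain ⟨N, hNlo, hNhi⟩ := exists_nat_le_two_mul hX
  have hN₁ : (1 : ℝ) ≤ N := hX.trans hNlo
  obtain ⟨C₁, hC₁, hcov₁⟩ := exists_finset_image_Icc_one_subset hp hq hpq N hδ
  obtain ⟨C₂, hC₂, hcov₂⟩ :=
    exists_finset_image_Ici_subset (q := q) hp hq hN₁ (half_pos (hδ.trans_le hδθ))
  refine (hasIntermediateCover_of_subset_closedBalls hδ hδθ C₁ C₂ ?_).mono ?_
  · rw [attenTopSine_eq_image]
    calc attenTopSineCurve p q '' Ici 1
        ⊆ attenTopSineCurve p q '' Icc 1 N ∪ attenTopSineCurve p q '' Ici (N : ℝ) := by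
          rw [← image_union, Icc_union_Ici_eq_Ici hN₁]
      _ ⊆ _ := union_subset_union hcov₁ hcov₂
  · rw [← rpow_mul hδ.le]
    calc (#C₁ : ℝ) * δ ^ s + #C₂ * δ ^ (θ * s)
        ≤ (4 * (p + p * q + π) / (1 - p * q) + 2) * δ ^ (-d) * δ ^ s +
          45 * δ ^ (-(θ * d)) * δ ^ (θ * s) := by
          gcongr
          · exact hC₁.trans (arcs_card_bound_le_rpow hp hq hpq hγd hd hδ hδ₁ hNhi)
          · exact hC₂.trans (tail_card_bound_le_rpow hp hq hγp hγpq hθd hδ hδ₁ hNlo)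
      _ = _ := by
          rw [mul_assoc, mul_assoc, ← rpow_add hδ, ← rpow_add hδ]
          ring_nf

lemma eventually_hasIntermediateCover_attenTopSine (hp : 0 < p) (hq : 0 < q) (hpq : p * q < 1)
    (hθ : 0 < θ) (hθ₁ : θ ≤ 1) (hγ : 0 < γ) (hd : 1 + γ * (1 - p * q) = d)
    (hθd : γ * (p + p * q) = θ * (2 - d)) {s ε : ℝ} (hs : d < s) (hε : 0 < ε) :
    ∀ᶠ δ in 𝓝[>] 0, HasIntermediateCover θ s δ ε (attenTopSine p q) := by
  filter_upwards [Ioo_mem_nhdsGT one_pos,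
    eventually_mul_rpow_le_mul_rpow (sub_pos.2 hs) (4 * (p + p * q + π) / (1 - p * q) + 2)
      (half_pos hε),
    eventually_mul_rpow_le_mul_rpow (mul_pos hθ (sub_pos.2 hs)) 45 (half_pos hε)]
    with δ ⟨hδ, hδ₁⟩ h₁ h₂
  rw [rpow_zero, mul_one] at h₁ h₂
  exact (hasIntermediateCover_attenTopSine hp hq hpq hθ hθ₁ hγ hd hθd s hδ hδ₁).mono
    (by linarith)

lemma exists_sample_sizes (hp : 0 < p) (hq : 0 < q) {δ : ℝ} (hγ : 0 < γ) (hδ : 0 < δ)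
    (hδ₁ : δ < 1) (h₄ : 4 * δ ≤ 4 ^ (-(p * q)) * δ ^ (γ * (p * q))) :
    ∃ N K : ℕ, 1 ≤ N ∧ 1 ≤ K ∧ 2 * δ * K ≤ (2 * N : ℝ) ^ (-(p * q)) ∧
      4 ^ (-(p * q)) / 4 * δ ^ (-(1 + γ * (1 - p * q))) ≤ N * K ∧
      p / 2 * 4 ^ (-p - 1) * δ ^ (γ * (p + 1)) ≤ p / 2 * (2 * N : ℝ) ^ (-p - 1) := by
  have hX : 1 ≤ δ ^ (-γ) := one_le_rpow_of_pos_of_le_one_of_nonpos hδ hδ₁.le (by linarith)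
  obtain ⟨N, hNlo, hNhi⟩ := exists_nat_le_two_mul hX
  have hN₁ : (1 : ℝ) ≤ N := hX.trans hNlo
  have hpow : ∀ c : ℝ, 0 ≤ c → 4 ^ (-c) * δ ^ (γ * c) ≤ (2 * N : ℝ) ^ (-c) := fun c hc ↦
    calc 4 ^ (-c) * δ ^ (γ * c) = (4 * δ ^ (-γ)) ^ (-c) := by
          rw [mul_rpow (by norm_num) (by positivity), ← rpow_mul hδ.le]
          ring_nf
      _ ≤ (2 * N : ℝ) ^ (-c) := rpow_le_rpow_of_nonpos (by positivity) (by linarith)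
          (by linarith)
  have hx : 1 ≤ (2 * N : ℝ) ^ (-(p * q)) / (4 * δ) := by
    rw [le_div_iff₀ (by positivity)]
    linarith [hpow (p * q) (by positivity)]
  obtain ⟨K, hKlo, hKhi⟩ := exists_nat_le_two_mul hx
  refine ⟨N, K, by exact_mod_cast hN₁, by exact_mod_cast hx.trans hKlo, ?_, ?_, ?_⟩
  · calc 2 * δ * K ≤ 2 * δ * (2 * ((2 * N : ℝ) ^ (-(p * q)) / (4 * δ))) := by gcongr
      _ = (2 * N : ℝ) ^ (-(p * q)) := by field_simp; ring
  · calc 4 ^ (-(p * q)) / 4 * δ ^ (-(1 + γ * (1 - p * q)))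
        = δ ^ (-γ) * (4 ^ (-(p * q)) * δ ^ (γ * (p * q)) / (4 * δ)) := by
          rw [show -(1 + γ * (1 - p * q)) = -γ + γ * (p * q) - 1 by ring, rpow_sub_one hδ.ne',
            rpow_add hδ]
          field_simp
      _ ≤ N * K := by
          gcongr
          exact (div_le_div_of_nonneg_right (hpow _ (by positivity)) (by positivity)).trans hKlo
  · rw [mul_assoc]
    gcongr
    have := hpow (p + 1) (by linarith)
    rwa [show -(p + 1) = -p - 1 by ring] at this

lemma eventually_add_one_mul_add_one_le_mul_rpow {s e cM cg : ℝ} (hθ : 0 < θ) (hθ₁ : θ ≤ 1)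
    (hs₀ : 0 ≤ s) (hs : s < d) (hd₁ : 1 ≤ d) (hd₂ : d < 2) (he : e - d = θ * (2 - d) - 1)
    (hcM : 0 < cM) (hcg : 0 < cg) :
    ∀ᶠ δ in 𝓝[>] 0, ∀ M g : ℝ, cM * δ ^ (-d) ≤ M → cg * δ ^ e ≤ g →
      ∀ r ∈ Icc δ (δ ^ θ), (r / g + 1) * (r / (2 * δ) + 1) ≤ M / 2 * r ^ s := by
  filter_upwards [self_mem_nhdsWithin,
    eventually_mul_rpow_le_mul_rpow (by nlinarith : θ * (2 - d) < θ * (2 - s)) 8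
      (by positivity : 0 < cM * cg * 2),
    eventually_mul_rpow_le_mul_rpow (by nlinarith : θ * (2 - d) - 1 < 1 - s) 8
      (mul_pos hcM hcg),
    eventually_mul_rpow_le_mul_rpow (by nlinarith : θ * (2 - d) - 1 < θ * (1 - s)) 8
      (mul_pos hcM hcg),
    eventually_mul_rpow_le_mul_rpow (by linarith : 1 - d < 1 - s) 8 (by positivity : 0 < cM * 2),
    eventually_mul_rpow_le_mul_rpow (by nlinarith : 1 - d < θ * (1 - s)) 8
      (by positivity : 0 < cM * 2),
    eventually_mul_rpow_le_mul_rpow (by linarith : s - d < 0) 8 hcM]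
    with δ (hδ : 0 < δ) e₁ e₂ e₃ e₄ e₅ e₆ M g hM hg r hr
  rw [rpow_zero, mul_one] at e₆
  have hMg : cM * cg * δ ^ (θ * (2 - d) - 1) ≤ M * g := by
    calc cM * cg * δ ^ (θ * (2 - d) - 1) = cM * δ ^ (-d) * (cg * δ ^ e) := by
          rw [mul_mul_mul_comm, ← rpow_add hδ, ← he]
          ring_nf
      _ ≤ M * g :=
          mul_le_mul hM hg (by positivity) ((by positivity : (0 : ℝ) ≤ cM * δ ^ (-d)).trans hM)
  have hMh : cM * 2 * δ ^ (1 - d) ≤ M * (2 * δ) := by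
    calc cM * 2 * δ ^ (1 - d) = cM * δ ^ (-d) * (2 * δ) := by
          rw [show 1 - d = -d + 1 by ring, rpow_add_one hδ.ne']
          ring
      _ ≤ _ := by gcongr
  have hθpow : ∀ x : ℝ, (δ ^ θ) ^ x = δ ^ (θ * x) := fun x ↦ (rpow_mul hδ.le θ x).symm
  refine add_one_mul_add_one_le_mul_rpow hδ hr ((by positivity : 0 < cg * δ ^ e).trans_le hg)
    (by positivity) hs₀ (by linarith) ?_ ?_ ?_ ?_
  · rw [hθpow]
    calc 8 * δ ^ (θ * (2 - s)) ≤ cM * cg * 2 * δ ^ (θ * (2 - d)) := e₁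
      _ = cM * cg * δ ^ (θ * (2 - d) - 1) * (2 * δ) := by
          rw [show θ * (2 - d) = θ * (2 - d) - 1 + 1 by ring, rpow_add_one hδ.ne']
          ring_nf
      _ ≤ _ := mul_le_mul_of_nonneg_right hMg (by positivity)
  · rw [hθpow, mul_max_of_nonneg _ _ (by norm_num)]
    exact max_le (e₂.trans hMg) (e₃.trans hMg)
  · rw [hθpow, mul_max_of_nonneg _ _ (by norm_num)]
    exact max_le (e₄.trans hMh) (e₅.trans hMh)
  · calc 8 ≤ cM * δ ^ (s - d) := e₆
      _ = cM * δ ^ (-d) * δ ^ s := by rw [mul_assoc, ← rpow_add hδ]; ring_nf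
      _ ≤ _ := by gcongr

lemma eventually_not_hasIntermediateCover_attenTopSine (hp : 0 < p) (hq : 0 < q)
    (hpq : p * q < 1) (hθ : 0 < θ) (hθ₁ : θ ≤ 1) (hγ : 0 < γ) (hd : 1 + γ * (1 - p * q) = d)
    (hθd : γ * (p + p * q) = θ * (2 - d)) {s : ℝ} (hs₀ : 0 ≤ s) (hs : s < d) :
    ∀ᶠ δ in 𝓝[>] 0, ¬HasIntermediateCover θ s δ 1 (attenTopSine p q) := by
  obtain ⟨-, -, hγpq, -, hd₂⟩ := exponent_bounds hp hq hpq hθ hθ₁ hγ hd hθd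
  have hd₁ : 1 ≤ d := by nlinarith [mul_pos hp hq]
  filter_upwards [Ioo_mem_nhdsGT one_pos,
    eventually_mul_rpow_le_mul_rpow (by linarith : γ * (p * q) < 1) 4
      (by positivity : (0 : ℝ) < 4 ^ (-(p * q))),
    eventually_add_one_mul_add_one_le_mul_rpow hθ hθ₁ hs₀ hs hd₁ hd₂
      (by linear_combination hθd + hd : γ * (p + 1) - d = θ * (2 - d) - 1)
      (by positivity : (0 : ℝ) < 4 ^ (-(p * q)) / 4) (by positivity : 0 < p / 2 * 4 ^ (-p - 1))]
    with δ ⟨hδ, hδ₁⟩ h₄ hcount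
  rw [rpow_one] at h₄
  obtain ⟨N, K, hN, hK, hKN, hM, hg⟩ := exists_sample_sizes hp hq hγ hδ hδ₁ h₄
  rw [hd] at hM
  exact not_hasIntermediateCover_attenTopSine hp hq hδ hN hK hKN (hcount _ _ hM hg)

end Dimension

theorem stmt18 (p q θ : ℝ) (hp : 0 < p) (hq : 0 < q) (hpq : p * q < 1)
    (hθ : 0 < θ) (hθ' : θ ≤ 1) :
    lodim θ (attenTopSine p q) =
        (p * (1 + q) + 2 * θ * (1 - p * q)) / (p * (1 + q) + θ * (1 - p * q)) ∧
      updim θ (attenTopSine p q) =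
        (p * (1 + q) + 2 * θ * (1 - p * q)) / (p * (1 + q) + θ * (1 - p * q)) := by
  have hpq' : 0 < 1 - p * q := by linarith
  have hD : 0 < p * (1 + q) + θ * (1 - p * q) := by positivity
  set γ := θ / (p * (1 + q) + θ * (1 - p * q))
  have hγ : 0 < γ := by positivity
  have hd : 1 + γ * (1 - p * q) =
      (p * (1 + q) + 2 * θ * (1 - p * q)) / (p * (1 + q) + θ * (1 - p * q)) := by
    simp only [γ]
    field_simp
    ring
  have hθd : γ * (p + p * q) =
      θ * (2 - (p * (1 + q) + 2 * θ * (1 - p * q)) / (p * (1 + q) + θ * (1 - p * q))) := by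
    simp only [γ]
    field_simp
    ring
  exact lodim_eq_and_updim_eq_of (by positivity)
    (fun s hs ε hε ↦ eventually_hasIntermediateCover_attenTopSine hp hq hpq hθ hθ' hγ hd hθd hs hε)
    (fun s hs₀ hs ↦ ⟨1, one_pos,
      eventually_not_hasIntermediateCover_attenTopSine hp hq hpq hθ hθ' hγ hd hθd hs₀ hs⟩)
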